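/- arXiv:2207.14653 — 2 statements merged into one kernel-verified Lean document; each statement's English description precedes it below -/
import Mathlib

section
/- Let k : E × E → ℂ be a continuous Hermitian positive-semidefinite kernel on a compact metric space E equipped with a finite Borel measure ν. Then the integral operator L_k f (x) := ∫_E k(x,y) f(y) dν(y) is a bounded, self-adjoint, positive operator on L²(E, ν; ℂ). -/
/-! The operator is `f ↦ (x ↦ ⟪K x, f⟫)`, where `K x = conj k(x, ·) ∈ L²` depends continuously
on `x`; it therefore factors through `C(E, ℂ)` and is bounded. By Fubini, `⟪f, L g⟫` is the
double integral of `k(x, y) conj f(x) g(y)`, and Hermitian symmetry of `k` makes this symmetric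
in `f` and `g`. For positivity, replace `k(x, y)` by `k(q x, q y)` for a simple function `q`
moving every point by less than `δ`: the double integral becomes the finite sum
`∑ conj (Φ a) k(a, b) Φ b` with `Φ a = ∫_{q = a} f`, which is nonnegative, and by uniform
continuity of `k` it changes by at most `ε ‖f‖₁²`. -/

open MeasureTheory
open scoped ComplexConjugate InnerProductSpace ComplexOrder

section Integrals

variable {α : Type*} [MeasurableSpace α] {μ : Measure α}

theorem MeasureTheory.Integrable.conj {f : α → ℂ} (hf : Integrable f μ) :
    Integrable (fun x => conj (f x)) μ :=
  RCLike.conjCLE.toContinuousLinearMap.integrable_comp hf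

theorem integrable_kernel_mul_conj_mul [SFinite μ] {k : α × α → ℂ} {C : ℝ}
    (hk : AEStronglyMeasurable k (μ.prod μ)) (hkC : ∀ p, ‖k p‖ ≤ C) {φ ψ : α → ℂ}
    (hφ : Integrable φ μ) (hψ : Integrable ψ μ) :
    Integrable (fun p => k p * (conj (φ p.1) * ψ p.2)) (μ.prod μ) :=
  (hφ.conj.mul_prod hψ).bdd_mul hk (ae_of_all _ hkC)

theorem norm_integral_kernel_sub_le [SFinite μ] {k₁ k₂ : α × α → ℂ} {φ ψ : α → ℂ} {ε : ℝ}
    (hφ : Integrable φ μ) (hψ : Integrable ψ μ)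
    (h₁ : Integrable (fun p => k₁ p * (conj (φ p.1) * ψ p.2)) (μ.prod μ))
    (h₂ : Integrable (fun p => k₂ p * (conj (φ p.1) * ψ p.2)) (μ.prod μ))
    (hk : ∀ p, ‖k₁ p - k₂ p‖ ≤ ε) :
    ‖∫ p, k₁ p * (conj (φ p.1) * ψ p.2) ∂μ.prod μ -
        ∫ p, k₂ p * (conj (φ p.1) * ψ p.2) ∂μ.prod μ‖ ≤
      ε * ((∫ x, ‖φ x‖ ∂μ) * ∫ x, ‖ψ x‖ ∂μ) := by
  rw [← integral_sub h₁ h₂, ← integral_prod_mul, ← integral_const_mul]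
  refine norm_integral_le_of_norm_le ((hφ.norm.mul_prod hψ.norm).const_mul ε) (ae_of_all _ ?_)
  intro p
  rw [← sub_mul, norm_mul, norm_mul, RCLike.norm_conj]
  exact mul_le_mul_of_nonneg_right (hk p) (by positivity)

theorem integral_comp_mul_eq_sum {β : Type*} {q : α → β} (s : Finset β) (hs : ∀ x, q x ∈ s)
    (hq : ∀ b ∈ s, MeasurableSet (q ⁻¹' {b})) (h : β → ℂ) {ψ : α → ℂ} (hψ : Integrable ψ μ) :
    ∫ x, h (q x) * ψ x ∂μ = ∑ b ∈ s, h b * ∫ x in q ⁻¹' {b}, ψ x ∂μ := by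
  have hcover : (⋃ b ∈ s, q ⁻¹' {b}) = Set.univ := by
    ext x
    simpa using hs x
  rw [← setIntegral_univ, ← hcover, integral_biUnion_finset s hq ?disj ?int]
  · refine Finset.sum_congr rfl fun b hb => ?_
    rw [← integral_const_mul]
    exact setIntegral_congr_fun (hq b hb) fun x hx => by rw [show q x = b from hx]
  case disj =>
    exact fun b _ b' _ hbb' => Set.disjoint_left.2 fun x hx hx' => hbb' (hx.symm.trans hx')
  case int =>
    intro b hb
    exact IntegrableOn.congr_fun (hψ.integrableOn.const_mul (h b))
      (fun x hx => by rw [show q x = b from hx]) (hq b hb)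

end Integrals

section Construction

variable {E : Type*} [TopologicalSpace E] [CompactSpace E] [MeasurableSpace E] [BorelSpace E]
  (ν : Measure E) [IsFiniteMeasure ν]

noncomputable def kernelSection (k : C(E × E, ℂ)) : C(E, Lp ℂ 2 ν) :=
  ⟨fun x => ContinuousMap.toLp 2 ν ℂ ((star k).curry x),
    (ContinuousMap.toLp 2 ν ℂ).continuous.comp (star k).curry.continuous⟩

noncomputable def integralOperatorToContinuousMap (k : C(E × E, ℂ)) :
    Lp ℂ 2 ν →L[ℂ] C(E, ℂ) :=
  LinearMap.mkContinuous
    { toFun := fun f => ⟨fun x => ⟪kernelSection ν k x, f⟫_ℂ,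
        (kernelSection ν k).continuous.inner continuous_const⟩
      map_add' := fun f g => by ext x; simp [inner_add_right]
      map_smul' := fun c f => by ext x; simp [inner_smul_right] }
    ‖kernelSection ν k‖ fun f => (ContinuousMap.norm_le _ (by positivity)).2 fun x =>
      (norm_inner_le_norm _ _).trans
        (mul_le_mul_of_nonneg_right ((kernelSection ν k).norm_coe_le_norm x) (norm_nonneg f))

noncomputable def integralOperator (k : C(E × E, ℂ)) : Lp ℂ 2 ν →L[ℂ] Lp ℂ 2 ν :=
  (ContinuousMap.toLp 2 ν ℂ).comp (integralOperatorToContinuousMap ν k)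

theorem inner_kernelSection (k : C(E × E, ℂ)) (x : E) (f : Lp ℂ 2 ν) :
    ⟪kernelSection ν k x, f⟫_ℂ = ∫ y, k (x, y) * f y ∂ν := by
  rw [L2.inner_def]
  refine integral_congr_ae ?_
  filter_upwards [ContinuousMap.coeFn_toLp (p := 2) (𝕜 := ℂ) ν ((star k).curry x)] with y hy
  rw [kernelSection, ContinuousMap.coe_mk, RCLike.inner_apply, hy]
  simp [mul_comm]

theorem integralOperator_ae_eq (k : C(E × E, ℂ)) (f : Lp ℂ 2 ν) :
    integralOperator ν k f =ᵐ[ν] fun x => ∫ y, k (x, y) * f y ∂ν := by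
  filter_upwards [ContinuousMap.coeFn_toLp (p := 2) (𝕜 := ℂ) ν
    (integralOperatorToContinuousMap ν k f)] with x hx
  rw [integralOperator, ContinuousLinearMap.comp_apply, hx, ← inner_kernelSection]
  rfl

end Construction

section SecondCountable

variable {E : Type*} [TopologicalSpace E] [SecondCountableTopology E] [CompactSpace E]
  [MeasurableSpace E] [BorelSpace E] (ν : Measure E) [IsFiniteMeasure ν]

theorem inner_integralOperator (k : C(E × E, ℂ)) (f g : Lp ℂ 2 ν) :
    ⟪f, integralOperator ν k g⟫_ℂ = ∫ p, k p * (conj (f p.1) * g p.2) ∂ν.prod ν := by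
  have hL1 : ∀ h : Lp ℂ 2 ν, Integrable h ν := fun h => (Lp.memLp h).integrable one_le_two
  rw [L2.inner_def, integral_prod _ (integrable_kernel_mul_conj_mul
    k.continuous.aestronglyMeasurable k.norm_coe_le_norm (hL1 f) (hL1 g))]
  refine integral_congr_ae ?_
  filter_upwards [integralOperator_ae_eq ν k g] with x hx
  rw [RCLike.inner_apply', hx, ← integral_const_mul]
  congr 1 with y
  ring

theorem isSymmetric_integralOperator {k : C(E × E, ℂ)}
    (hk : ∀ x y, k (x, y) = conj (k (y, x))) : (integralOperator ν k).IsSymmetric := by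
  intro f g
  rw [ContinuousLinearMap.coe_coe, ← inner_conj_symm, inner_integralOperator,
    inner_integralOperator, ← integral_conj, ← integral_prod_swap]
  congr 1 with ⟨x, y⟩
  rw [Prod.swap_prod_mk, hk x y, map_mul, map_mul, RCLike.conj_conj]
  ring

end SecondCountable

def IsPosSemidefKernel {E : Type*} (k : E × E → ℂ) : Prop :=
  ∀ (n : ℕ) (x : Fin n → E) (c : Fin n → ℂ), 0 ≤ (∑ i, ∑ j, c i * conj (c j) * k (x j, x i)).re

namespace IsPosSemidefKernel

variable {E : Type*} {k : E × E → ℂ}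

theorem re_sum_nonneg (hk : IsPosSemidefKernel k) (s : Finset E) (c : E → ℂ) :
    0 ≤ (∑ a ∈ s, ∑ b ∈ s, c a * conj (c b) * k (b, a)).re := by
  have h := hk s.card (fun i => s.equivFin.symm i) (fun i => c (s.equivFin.symm i))
  convert h using 2
  rw [← Finset.sum_coe_sort s, ← s.equivFin.symm.sum_comp]
  refine Fintype.sum_congr _ _ fun i => ?_
  rw [← Finset.sum_coe_sort s, ← s.equivFin.symm.sum_comp]

theorem re_integral_comp_simpleFunc_nonneg (hk : IsPosSemidefKernel k) {α : Type*}
    [MeasurableSpace α] {μ : Measure α} [SFinite μ] (q : SimpleFunc α E) {φ : α → ℂ}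
    (hφ : Integrable φ μ) :
    0 ≤ (∫ p, k (q p.1, q p.2) * (conj (φ p.1) * φ p.2) ∂μ.prod μ).re := by
  set Φ : E → ℂ := fun a => ∫ x in q ⁻¹' {a}, φ x ∂μ
  have hfiber : ∀ a b,
      (fun p : α × α => (q p.1, q p.2)) ⁻¹' {(a, b)} = (q ⁻¹' {a}) ×ˢ (q ⁻¹' {b}) :=
    fun a b => by ext; simp
  have hcell : ∀ a b, ∫ p in (fun p : α × α => (q p.1, q p.2)) ⁻¹' {(a, b)},
      conj (φ p.1) * φ p.2 ∂μ.prod μ = conj (Φ a) * Φ b := fun a b => by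
    rw [hfiber, setIntegral_prod_mul (fun x => conj (φ x)) φ, integral_conj]
  rw [integral_comp_mul_eq_sum (q.range ×ˢ q.range) (by simp) (fun ab _ => ?_) k
    (hφ.conj.mul_prod hφ), Finset.sum_product]
  · simp only [hcell]
    have h := hk.re_sum_nonneg q.range Φ
    rw [Finset.sum_comm] at h
    refine h.trans_eq (congrArg _ (Finset.sum_congr rfl fun a _ =>
      Finset.sum_congr rfl fun b _ => ?_))
    ring
  · rw [← Prod.mk.eta (p := ab), hfiber]
    exact (q.measurableSet_fiber _).prod (q.measurableSet_fiber _)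

end IsPosSemidefKernel

section Metric

variable {E : Type*} [MetricSpace E] [CompactSpace E] [MeasurableSpace E]

theorem MeasureTheory.SimpleFunc.exists_forall_dist_lt [OpensMeasurableSpace E] {δ : ℝ}
    (hδ : 0 < δ) : ∃ q : SimpleFunc E E, ∀ x, dist (q x) x < δ := by
  rcases isEmpty_or_nonempty E with hE | hE
  · exact ⟨SimpleFunc.ofIsEmpty, isEmptyElim⟩
  set e := TopologicalSpace.denseSeq E
  obtain ⟨t, ht⟩ := isCompact_univ.elim_finite_subcover (fun n => Metric.ball (e n) δ)
    (fun _ => Metric.isOpen_ball) fun x _ => by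
      obtain ⟨n, hn⟩ := (TopologicalSpace.denseRange_denseSeq E).exists_dist_lt x hδ
      exact Set.mem_iUnion.2 ⟨n, hn⟩
  refine ⟨SimpleFunc.nearestPt e (t.sup id), fun x => ?_⟩
  obtain ⟨n, hn, hxn⟩ := Set.mem_iUnion₂.1 (ht (Set.mem_univ x))
  rw [← edist_lt_ofReal]
  exact (SimpleFunc.edist_nearestPt_le e x (Finset.le_sup (f := id) hn)).trans_lt
    (edist_lt_ofReal.2 (Metric.mem_ball'.1 hxn))

variable [BorelSpace E] {ν : Measure E} [IsFiniteMeasure ν]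

theorem IsPosSemidefKernel.re_integral_nonneg {k : C(E × E, ℂ)} (hk : IsPosSemidefKernel k)
    {φ : E → ℂ} (hφ : Integrable φ ν) :
    0 ≤ (∫ p, k p * (conj (φ p.1) * φ p.2) ∂ν.prod ν).re := by
  set c := (∫ x, ‖φ x‖ ∂ν) * ∫ x, ‖φ x‖ ∂ν
  refine le_of_forall_pos_le_add fun ε hε => ?_
  obtain ⟨δ, hδ, hkδ⟩ := Metric.uniformContinuous_iff.1
    (CompactSpace.uniformContinuous_of_continuous k.continuous) (ε / (c + 1)) (by positivity)
  obtain ⟨q, hq⟩ := SimpleFunc.exists_forall_dist_lt (E := E) hδ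
  have hclose : ∀ p : E × E, ‖k p - k (q p.1, q p.2)‖ ≤ ε / (c + 1) := fun p => by
    rw [← dist_eq_norm, dist_comm]
    exact (hkδ (max_lt (hq p.1) (hq p.2))).le
  have hq_meas : Measurable fun p : E × E => (q p.1, q p.2) :=
    (q.measurable.comp measurable_fst).prodMk (q.measurable.comp measurable_snd)
  have hdiff := norm_integral_kernel_sub_le (k₂ := fun p => k (q p.1, q p.2)) hφ hφ
    (integrable_kernel_mul_conj_mul k.continuous.aestronglyMeasurable k.norm_coe_le_norm hφ hφ)
    (integrable_kernel_mul_conj_mul (k.continuous.measurable.comp hq_meas).aestronglyMeasurable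
      (fun p => k.norm_coe_le_norm _) hφ hφ) hclose
  have hre := (abs_le.1 ((Complex.abs_re_le_norm _).trans hdiff)).1
  rw [Complex.sub_re] at hre
  have hcε : ε / (c + 1) * c ≤ ε := by
    rw [div_mul_eq_mul_div, div_le_iff₀ (by positivity)]
    nlinarith
  linarith [hk.re_integral_comp_simpleFunc_nonneg q hφ]

variable (ν)

theorem isPositive_integralOperator {k : C(E × E, ℂ)}
    (hherm : ∀ x y, k (x, y) = conj (k (y, x))) (hpsd : IsPosSemidefKernel k) :
    (integralOperator ν k).IsPositive := by
  have hsym := isSymmetric_integralOperator ν hherm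
  refine ⟨hsym, fun f => ?_⟩
  rw [ContinuousLinearMap.reApplyInnerSelf_apply, ← ContinuousLinearMap.coe_coe, hsym f f,
    ContinuousLinearMap.coe_coe, inner_integralOperator]
  exact hpsd.re_integral_nonneg ((Lp.memLp f).integrable one_le_two)

end Metric

/-- For a continuous Hermitian positive-semidefinite kernel `k` on a compact
metric space `E` with a finite Borel measure `ν`, the integral operator
`L_k f (x) = ∫ k(x,y) f(y) dν(y)` is a bounded, self-adjoint, positive operator on
`L²(E,ν;ℂ)`. -/
theorem integral_kernel_operator_selfadjoint_positive
    {E : Type*} [MetricSpace E] [CompactSpace E] [MeasurableSpace E] [BorelSpace E]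
    (ν : Measure E) [IsFiniteMeasure ν]
    (k : E → E → ℂ)
    (hcont : Continuous fun p : E × E => k p.1 p.2)
    (hherm : ∀ x y : E, k x y = starRingEnd ℂ (k y x))
    (hpsd : ∀ (n : ℕ) (x : Fin n → E) (c : Fin n → ℂ),
      0 ≤ (∑ i, ∑ j, c i * starRingEnd ℂ (c j) * k (x j) (x i)).re ∧
      (∑ i, ∑ j, c i * starRingEnd ℂ (c j) * k (x j) (x i)).im = 0) :
    ∃ L : Lp ℂ 2 ν →L[ℂ] Lp ℂ 2 ν,
      (∀ f : Lp ℂ 2 ν, (L f : E → ℂ) =ᵐ[ν] fun x => ∫ y, k x y * f y ∂ν) ∧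
      (∀ f g : Lp ℂ 2 ν, (inner ℂ (L f) g : ℂ) = (inner ℂ f (L g) : ℂ)) ∧
      (∀ f : Lp ℂ 2 ν, 0 ≤ (inner ℂ (L f) f : ℂ).re ∧ (inner ℂ (L f) f : ℂ).im = 0) := by
  let K : C(E × E, ℂ) := ⟨fun p => k p.1 p.2, hcont⟩
  have hL := isPositive_integralOperator ν (k := K) hherm fun n x c => (hpsd n x c).1
  refine ⟨integralOperator ν K, integralOperator_ae_eq ν K, hL.inner_left_eq_inner_right,
    fun f => ?_⟩
  obtain ⟨hre, him⟩ := Complex.nonneg_iff.1 (hL.inner_nonneg_left f)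
  exact ⟨hre, him.symm⟩
end

section
/- Let k : E × E → ℂ be a continuous kernel on a compact metric space E with finite Borel measure ν. Then the integral operator L_k on L²(E, ν; ℂ) defined by L_k f(x) = ∫ k(x,y) f(y) dν(y) is a compact operator. -/
/-!
With `κ x := ⟪conj k(x, ·), ·⟫`, a continuous map from `E` into the dual of `L²`, the operator
factors as `f ↦ (x ↦ κ x f)` into `C(E)` followed by the inclusion `C(E) → L²`. On the unit ball
the functions `x ↦ κ x f` are bounded by `sup ‖κ‖` and satisfy
`‖κ x f - κ x₀ f‖ ≤ ‖κ x - κ x₀‖`, so they are equicontinuous and Arzelà–Ascoli makes the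
first factor compact.
-/

open MeasureTheory BoundedContinuousFunction Filter

namespace ContinuousMap

variable {α 𝕜 X Y : Type*} [TopologicalSpace α] [CompactSpace α] [NontriviallyNormedField 𝕜]
  [NormedAddCommGroup X] [NormedSpace 𝕜 X] [NormedAddCommGroup Y] [NormedSpace 𝕜 Y]

noncomputable def applyCLM (κ : C(α, X →L[𝕜] Y)) : X →L[𝕜] α →ᵇ Y :=
  LinearMap.mkContinuous
    { toFun := fun f => mkOfCompact ⟨fun x => κ x f, κ.continuous.clm_apply continuous_const⟩
      map_add' := fun f g => by ext; simp
      map_smul' := fun c f => by ext; simp }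
    ‖κ‖ fun f => (norm_le _ (by positivity)).mpr fun x =>
      (κ x).le_of_opNorm_le (κ.norm_coe_le_norm x) f

@[simp]
theorem applyCLM_apply (κ : C(α, X →L[𝕜] Y)) (f : X) (x : α) : applyCLM κ f x = κ x f :=
  rfl

theorem isCompactOperator_applyCLM [ProperSpace Y] (κ : C(α, X →L[𝕜] Y)) :
    IsCompactOperator (applyCLM κ) := by
  refine (isCompactOperator_iff_isCompact_closure_image_closedBall
    (applyCLM κ).toLinearMap one_pos).mpr ?_
  refine arzela_ascoli (Metric.closedBall 0 ‖κ‖) (isCompact_closedBall _ _) _ ?_ ?_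
  · rintro _ x ⟨f, hf, rfl⟩
    rw [mem_closedBall_zero_iff] at hf
    rw [mem_closedBall_zero_iff, ContinuousLinearMap.coe_coe, applyCLM_apply]
    exact (κ x).le_of_opNorm_le_of_le (κ.norm_coe_le_norm x) hf |>.trans_eq (mul_one _)
  · intro x₀
    refine Metric.equicontinuousAt_of_continuity_modulus (fun x => ‖κ x - κ x₀‖)
      (tendsto_iff_norm_sub_tendsto_zero.mp (κ.continuous.tendsto x₀)) _
      (Eventually.of_forall fun x g => ?_)
    obtain ⟨f, hf, hfg⟩ := g.2
    rw [mem_closedBall_zero_iff] at hf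
    rw [← hfg, dist_comm, dist_eq_norm, ContinuousLinearMap.coe_coe, applyCLM_apply,
      applyCLM_apply]
    exact (κ x - κ x₀).le_of_opNorm_le_of_le le_rfl hf |>.trans_eq (mul_one _)

end ContinuousMap

theorem MeasureTheory.L2.inner_toLp_star {α 𝕜 : Type*} [TopologicalSpace α] [CompactSpace α]
    [MeasurableSpace α] [BorelSpace α] [RCLike 𝕜] {μ : Measure α} [IsFiniteMeasure μ]
    (g : C(α, 𝕜)) (f : Lp 𝕜 2 μ) :
    inner 𝕜 (ContinuousMap.toLp 2 μ 𝕜 (star g)) f = ∫ x, g x * f x ∂μ := by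
  rw [L2.inner_def]
  refine integral_congr_ae ?_
  filter_upwards [ContinuousMap.coeFn_toLp (E := 𝕜) (p := 2) μ (𝕜 := 𝕜) (star g)] with x hx
  rw [hx]
  simp [mul_comm]

/-- For a continuous kernel `k` on a compact metric space `E` with finite Borel
measure `ν`, the integral operator `L_k f (x) = ∫ k(x,y) f(y) dν(y)` is a compact operator
on `L²(E,ν;ℂ)`. -/
theorem integral_kernel_operator_compact
    {E : Type*} [MetricSpace E] [CompactSpace E] [MeasurableSpace E] [BorelSpace E]
    (ν : Measure E) [IsFiniteMeasure ν]
    (k : E → E → ℂ)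
    (hcont : Continuous fun p : E × E => k p.1 p.2) :
    ∃ L : Lp ℂ 2 ν →L[ℂ] Lp ℂ 2 ν,
      (∀ f : Lp ℂ 2 ν, (L f : E → ℂ) =ᵐ[ν] fun x => ∫ y, k x y * f y ∂ν) ∧
      IsCompactOperator L := by
  let K : C(E × E, ℂ) := ⟨_, hcont⟩
  let κ : C(E, Lp ℂ 2 ν →L[ℂ] ℂ) :=
    ⟨fun x => innerSL ℂ (ContinuousMap.toLp 2 ν ℂ (star (K.curry x))),
      (innerSL ℂ).continuous.comp ((ContinuousMap.toLp 2 ν ℂ).continuous.comp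
        (continuous_star.comp K.curry.continuous))⟩
  refine ⟨(BoundedContinuousFunction.toLp 2 ν ℂ).comp κ.applyCLM, fun f => ?_, ?_⟩
  · filter_upwards [BoundedContinuousFunction.coeFn_toLp 2 ν ℂ (κ.applyCLM f)] with x hx
    rw [ContinuousLinearMap.comp_apply, hx, ContinuousMap.applyCLM_apply]
    exact L2.inner_toLp_star (K.curry x) f
  · rw [ContinuousLinearMap.coe_comp]
    exact κ.isCompactOperator_applyCLM.clm_comp _
end
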